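/- Any subgroup Γ of SL(2, F) commensurable with the Hilbert modular group SL(2, O_F) has only finitely many orbits on P¹(F) (i.e., Γ has finitely many cusps). -/

import Mathlib

/-! Having finitely many orbits passes to finite-index subgroups and to overgroups, so through
`Γ ∩ SL(2, O_F)` it suffices to treat `SL(2, R)` acting on `ℙ¹(K)` for a Dedekind domain `R` with
fraction field `K`. There the ideal class of `R v₀ + R v₁` is a complete orbit invariant of
`(v₀ : v₁)`: it ignores scaling and `SL(2, R)`, and if `v` and `w` generate the same ideal `I`,
writing `1 = v₀u₀ + v₁u₁` and `1 = w₀u₀' + w₁u₁'` with `uᵢ, uᵢ' ∈ I⁻¹` yields an element of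
`SL(2, R)` taking `v` to `w`. So the cusps inject into the finite class group. -/

open NumberField nonZeroDivisors

/-- The action of `SL(2, F)` on the projective line `ℙ¹(F)`. -/
noncomputable instance P1.mulAction {F : Type*} [Field F] :
    MulAction (Matrix.SpecialLinearGroup (Fin 2) F) (Projectivization F (Fin 2 → F)) where
  smul g x := x.map (Matrix.SpecialLinearGroup.toLin' g).toLinearMap
    (Matrix.SpecialLinearGroup.toLin' g).injective
  one_smul x := by
    induction x using Projectivization.ind with
    | h v hv =>
      show Projectivization.map _ _ _ = _
      rw [Projectivization.map_mk]
      simp [map_one]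
  mul_smul g h x := by
    induction x using Projectivization.ind with
    | h v hv =>
      show Projectivization.map _ _ _ = Projectivization.map _ _ (Projectivization.map _ _ _)
      rw [Projectivization.map_mk, Projectivization.map_mk, Projectivization.map_mk]
      simp [map_mul]

/-- The Hilbert modular group `SL(2, O_F)`, viewed as a subgroup of `SL(2, F)`. -/
noncomputable def HilbertModularGroup (F : Type*) [Field F] [NumberField F] :
    Subgroup (Matrix.SpecialLinearGroup (Fin 2) F) :=
  (Matrix.SpecialLinearGroup.map (algebraMap (𝓞 F) F)).range

open FractionalIdeal Matrix
open scoped LinearAlgebra.Projectivization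

theorem Subgroup.finite_quotient_of_finite_quotient_of_relIndex_ne_zero {G X : Type*} [Group G]
    [MulAction G X] {Γ Δ : Subgroup G} (h : Γ.relIndex Δ ≠ 0)
    [Finite (MulAction.orbitRel.Quotient Δ X)] : Finite (MulAction.orbitRel.Quotient Γ X) := by
  have : Finite (MulAction.orbitRel.Quotient (Γ.subgroupOf Δ) X) :=
    Subgroup.finite_quotient_of_finite_quotient_of_index_ne_zero h
  have hle : MulAction.orbitRel (Γ.subgroupOf Δ) X ≤ MulAction.orbitRel Γ X := by
    rw [MulAction.orbitRel_subgroupOf, inf_comm, ← MulAction.orbitRel_subgroupOf]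
    exact MulAction.orbitRel_subgroup_le _
  exact Finite.of_surjective (Setoid.map_of_le hle) (Quotient.ind fun x => ⟨⟦x⟧, rfl⟩)

theorem Matrix.SpecialLinearGroup.exists_map_eq_of_mem_range {n R S : Type*} [Fintype n]
    [DecidableEq n] [CommRing R] [CommRing S] {f : R →+* S} (hf : Function.Injective f)
    {N : Matrix n n S} (hN : ∀ i j, N i j ∈ f.range) (hdet : N.det = 1) :
    ∃ g : SpecialLinearGroup n R, (SpecialLinearGroup.map f g : Matrix n n S) = N := by
  choose r hr using hN
  have hmap : (Matrix.of r).map f = N := Matrix.ext hr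
  refine ⟨⟨Matrix.of r, hf ?_⟩, hmap⟩
  rw [RingHom.map_det, RingHom.mapMatrix_apply, hmap, hdet, map_one]

theorem ClassGroup.mk_mk0_eq_mk_mk0_iff {R K : Type*} [CommRing R] [IsDedekindDomain R] [Field K]
    [Algebra R K] [IsFractionRing R K] {I J : FractionalIdeal R⁰ K} (hI : I ≠ 0) (hJ : J ≠ 0) :
    ClassGroup.mk K (Units.mk0 I hI) = ClassGroup.mk K (Units.mk0 J hJ) ↔
      ∃ x : K, J = spanSingleton R⁰ x * I := by
  rw [eq_comm, ← div_eq_one, ← map_div, ClassGroup.mk_eq_one_iff, Units.val_div_eq_div_val,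
    Units.val_mk0, Units.val_mk0, isPrincipal_iff]
  simp_rw [div_eq_iff hI]

theorem P1.smul_mk {K : Type*} [Field K] (g : SpecialLinearGroup (Fin 2) K) {v : Fin 2 → K}
    (hv : v ≠ 0) :
    g • Projectivization.mk K v hv = Projectivization.mk K (g • v) ((smul_ne_zero_iff_ne g).2 hv) :=
  rfl

namespace FractionalIdeal

variable {R K ι : Type*} [CommRing R] [Field K] [Algebra R K] [IsFractionRing R K] [Fintype ι]

lemma mem_spanFinset_univ (v : ι → K) (i : ι) : v i ∈ spanFinset R Finset.univ v :=
  Submodule.subset_span ⟨i, Finset.mem_coe.2 (Finset.mem_univ i), rfl⟩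

lemma spanFinset_univ_le_iff {v : ι → K} {J : FractionalIdeal R⁰ K} :
    spanFinset R Finset.univ v ≤ J ↔ ∀ i, v i ∈ J := by
  rw [← coe_le_coe, spanFinset_coe, Submodule.span_le]
  simp [Set.subset_def]

lemma spanFinset_univ_ne_zero {v : ι → K} (hv : v ≠ 0) : spanFinset R Finset.univ v ≠ 0 :=
  spanFinset_ne_zero.2 (by simpa [funext_iff] using hv)

lemma spanFinset_univ_smul (c : K) (v : ι → K) :
    spanFinset R Finset.univ (c • v) = spanSingleton R⁰ c * spanFinset R Finset.univ v := by
  rw [← coeToSubmodule_inj, coe_mul, coe_spanSingleton, spanFinset_coe, spanFinset_coe,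
    Submodule.span_mul_span, Set.singleton_mul, Set.image_image]
  rfl

lemma spanFinset_univ_mulVec_le (A : Matrix ι ι R) (v : ι → K) :
    spanFinset R Finset.univ (A.map (algebraMap R K) *ᵥ v) ≤ spanFinset R Finset.univ v :=
  spanFinset_univ_le_iff.2 fun i => Submodule.sum_mem _ fun j _ => by
    simpa only [Matrix.map_apply, ← Algebra.smul_def] using
      Submodule.smul_mem _ (A i j) (mem_spanFinset_univ v j)

lemma spanFinset_univ_specialLinearGroup_smul [DecidableEq ι] (g : SpecialLinearGroup ι R)
    (v : ι → K) :
    spanFinset R Finset.univ (SpecialLinearGroup.map (algebraMap R K) g • v) =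
      spanFinset R Finset.univ v := by
  refine le_antisymm (spanFinset_univ_mulVec_le _ v) ?_
  conv_lhs => rw [← inv_smul_smul (SpecialLinearGroup.map (algebraMap R K) g) v, ← map_inv]
  exact spanFinset_univ_mulVec_le _ _

lemma exists_sum_mul_eq_one [IsDedekindDomain R] {v : ι → K}
    (hv : spanFinset R Finset.univ v ≠ 0) :
    ∃ u : ι → K, (∀ i, u i ∈ (spanFinset R Finset.univ v)⁻¹) ∧ ∑ i, v i * u i = 1 := by
  have h1 : (1 : K) ∈ spanFinset R Finset.univ v * (spanFinset R Finset.univ v)⁻¹ := by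
    rw [mul_inv_cancel₀ hv]; exact one_mem_one _
  rw [← mem_coe, coe_mul, spanFinset_coe, Finset.coe_univ, Set.image_univ,
    Submodule.span_range_eq_iSup, Submodule.iSup_mul, Submodule.mem_iSup_iff_exists_finsupp] at h1
  obtain ⟨f, hf, hsum⟩ := h1
  choose u hu hvu using fun i => Submodule.mem_span_singleton_mul.1 (hf i)
  refine ⟨u, hu, ?_⟩
  rw [← hsum, Finsupp.sum_fintype _ _ (fun _ => rfl)]
  exact Finset.sum_congr rfl fun i _ => hvu i

end FractionalIdeal

section DedekindDomain

variable {R K : Type*} [CommRing R] [IsDedekindDomain R] [Field K] [Algebra R K]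
  [IsFractionRing R K]

theorem exists_specialLinearGroup_smul_eq_of_spanFinset_eq {v w : Fin 2 → K} (hv : v ≠ 0)
    (h : spanFinset R Finset.univ v = spanFinset R Finset.univ w) :
    ∃ g : SpecialLinearGroup (Fin 2) R, SpecialLinearGroup.map (algebraMap R K) g • v = w := by
  set I := spanFinset R Finset.univ v
  have hI : I ≠ 0 := spanFinset_univ_ne_zero hv
  obtain ⟨u, hu, huv⟩ := exists_sum_mul_eq_one hI
  obtain ⟨u', hu', huw⟩ := exists_sum_mul_eq_one (h ▸ hI)
  rw [← h] at hu'
  rw [Fin.sum_univ_two] at huv huw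
  have hvI : ∀ i, v i ∈ I := mem_spanFinset_univ v
  have hwI : ∀ i, w i ∈ I := fun i => h ▸ mem_spanFinset_univ w i
  have hmem : ∀ {a b : K}, a ∈ I → b ∈ I⁻¹ → a * b ∈ (algebraMap R K).range := fun ha hb =>
    (mem_one_iff _).1 (mul_inv_cancel₀ hI ▸ mul_mem_mul ha hb)
  -- `N = M_w * M_v⁻¹` for `M_v = !![v 0, -u 1; v 1, u 0]` and `M_w = !![w 0, -u' 1; w 1, u' 0]`,
  -- which have determinant `1` and first columns `v` and `w`; each entry of `N` is a sum of
  -- products of an element of `I` with one of `I⁻¹`.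
  set N : Matrix (Fin 2) (Fin 2) K :=
    !![w 0 * u 0 + v 1 * u' 1, w 0 * u 1 - v 0 * u' 1;
      w 1 * u 0 - v 1 * u' 0, w 1 * u 1 + v 0 * u' 0]
  have hN : ∀ i j, N i j ∈ (algebraMap R K).range := by
    intro i j
    fin_cases i <;> fin_cases j
    · exact add_mem (hmem (hwI 0) (hu 0)) (hmem (hvI 1) (hu' 1))
    · exact sub_mem (hmem (hwI 0) (hu 1)) (hmem (hvI 0) (hu' 1))
    · exact sub_mem (hmem (hwI 1) (hu 0)) (hmem (hvI 1) (hu' 0))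
    · exact add_mem (hmem (hwI 1) (hu 1)) (hmem (hvI 0) (hu' 0))
  have hdet : N.det = 1 := by
    rw [Matrix.det_fin_two_of]
    linear_combination (w 0 * u' 0 + w 1 * u' 1) * huv + huw
  obtain ⟨g, hg⟩ :=
    SpecialLinearGroup.exists_map_eq_of_mem_range (IsFractionRing.injective R K) hN hdet
  refine ⟨g, ?_⟩
  change (SpecialLinearGroup.map (algebraMap R K) g : Matrix (Fin 2) (Fin 2) K) *ᵥ v = w
  rw [hg, mulVec_fin_two]
  refine funext (Fin.forall_fin_two.2 ⟨?_, ?_⟩)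
  · simp only [N, of_apply, cons_val', cons_val_zero, cons_val_one]
    linear_combination w 0 * huv
  · simp only [N, of_apply, cons_val', cons_val_zero, cons_val_one]
    linear_combination w 1 * huv

variable (R) in
noncomputable def cuspClass : ℙ K (Fin 2 → K) → ClassGroup R :=
  Projectivization.lift
    (fun v => ClassGroup.mk K (Units.mk0 (spanFinset R Finset.univ (v : Fin 2 → K))
      (spanFinset_univ_ne_zero v.2)))
    fun a b t hab => ((ClassGroup.mk_mk0_eq_mk_mk0_iff _ _).2
      ⟨t, by rw [hab, spanFinset_univ_smul]⟩).symm

lemma cuspClass_mk {v : Fin 2 → K} (hv : v ≠ 0) :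
    cuspClass R (Projectivization.mk K v hv) =
      ClassGroup.mk K (Units.mk0 (spanFinset R Finset.univ v) (spanFinset_univ_ne_zero hv)) :=
  rfl

lemma cuspClass_smul (g : SpecialLinearGroup (Fin 2) R) (x : ℙ K (Fin 2 → K)) :
    cuspClass R (SpecialLinearGroup.map (algebraMap R K) g • x) = cuspClass R x := by
  induction x using Projectivization.ind with
  | h v hv => simp only [P1.smul_mk, cuspClass_mk, spanFinset_univ_specialLinearGroup_smul]

lemma exists_smul_eq_of_cuspClass_eq {x y : ℙ K (Fin 2 → K)}
    (h : cuspClass R x = cuspClass R y) :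
    ∃ g : SpecialLinearGroup (Fin 2) R, SpecialLinearGroup.map (algebraMap R K) g • x = y := by
  induction x using Projectivization.ind with | h v hv =>
  induction y using Projectivization.ind with | h w hw =>
  obtain ⟨c, hc⟩ := (ClassGroup.mk_mk0_eq_mk_mk0_iff _ _).1 h
  rw [← spanFinset_univ_smul] at hc
  have hcv : c • v ≠ 0 := by
    rintro h0
    apply spanFinset_univ_ne_zero (R := R) hw
    rw [hc, h0]
    simp
  obtain ⟨g, hg⟩ := exists_specialLinearGroup_smul_eq_of_spanFinset_eq hcv hc.symm
  refine ⟨g, ?_⟩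
  rw [← (Projectivization.mk_eq_mk_iff' K _ v hcv hv).2 ⟨c, rfl⟩, P1.smul_mk]
  congr 1

theorem finite_orbitRel_quotient_range_map [Finite (ClassGroup R)] :
    Finite (MulAction.orbitRel.Quotient
      (SpecialLinearGroup.map (n := Fin 2) (algebraMap R K)).range (ℙ K (Fin 2 → K))) := by
  refine Finite.of_injective (Quotient.lift (cuspClass R) ?_) ?_
  · rintro _ y ⟨⟨_, g, rfl⟩, rfl⟩
    exact cuspClass_smul g y
  · rintro ⟨x⟩ ⟨y⟩ h
    obtain ⟨g, hg⟩ := exists_smul_eq_of_cuspClass_eq h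
    exact (Quotient.sound (s := MulAction.orbitRel _ _) ⟨⟨_, g, rfl⟩, hg⟩).symm

end DedekindDomain

/-- Any subgroup of `SL(2, F)` commensurable with the Hilbert modular group `SL(2, O_F)`
has finitely many orbits on `ℙ¹(F)`, i.e. finitely many cusps. -/
theorem finitely_many_cusps (F : Type*) [Field F] [NumberField F]
    (Γ : Subgroup (Matrix.SpecialLinearGroup (Fin 2) F))
    (hΓ : Subgroup.Commensurable Γ (HilbertModularGroup F)) :
    Finite (Quotient (MulAction.orbitRel Γ (Projectivization F (Fin 2 → F)))) := by
  have : Finite (MulAction.orbitRel.Quotient (HilbertModularGroup F) (ℙ F (Fin 2 → F))) :=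
    finite_orbitRel_quotient_range_map
  exact Subgroup.finite_quotient_of_finite_quotient_of_relIndex_ne_zero hΓ.1
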